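/- Let $H$ be a Hopf algebra, $R$ a coalgebra in ${}^H_H\mathcal{YD}$ with braiding $c$, and $x, y \in R$ such that $c\,\Delta_R(x) = \Delta_R(x)$, $c\,\Delta_R(y) = \Delta_R(y)$, and $(R\otimes c^2\otimes R)(\Delta_R\otimes\Delta_R)(x\otimes y) = (\Delta_R\otimes\Delta_R)(x\otimes y)$. Then for any left $H$-linear map $\omega : R\otimes R \to K$ and any linear map $\mu : R\otimes R \to R$, one has $(\omega * \mu)(x\otimes y) = (\mu * \omega)(x\otimes y)$. -/

import Mathlib

open TensorProduct

section Defs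

variable {K H R : Type*} [CommRing K] [Ring H] [HopfAlgebra K H]
  [AddCommGroup R] [Module K R] [Coalgebra K R]

/-- The Yetter-Drinfeld braiding `c(v ⊗ w) = v₍₋₁₎ · w ⊗ v₍₀₎` on `R ⊗ R`. -/
noncomputable def braidRR (act : (H ⊗[K] R) →ₗ[K] R) (ρ : R →ₗ[K] H ⊗[K] R) :
    (R ⊗[K] R) →ₗ[K] R ⊗[K] R :=
  (TensorProduct.map act LinearMap.id) ∘ₗ
  (TensorProduct.assoc K H R R).symm.toLinearMap ∘ₗ
  (TensorProduct.map LinearMap.id (TensorProduct.comm K R R).toLinearMap) ∘ₗ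
  (TensorProduct.assoc K H R R).toLinearMap ∘ₗ
  (TensorProduct.map ρ LinearMap.id)

/-- Apply a map `f : R ⊗ R → R ⊗ R` to the two middle tensorands of
`(R ⊗ R) ⊗ (R ⊗ R)`. -/
noncomputable def midMap (f : (R ⊗[K] R) →ₗ[K] R ⊗[K] R) :
    ((R ⊗[K] R) ⊗[K] (R ⊗[K] R)) →ₗ[K] (R ⊗[K] R) ⊗[K] (R ⊗[K] R) :=
  (TensorProduct.assoc K R R (R ⊗[K] R)).symm.toLinearMap ∘ₗ
  (TensorProduct.map LinearMap.id (TensorProduct.assoc K R R R).toLinearMap) ∘ₗ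
  (TensorProduct.map LinearMap.id (TensorProduct.map f LinearMap.id)) ∘ₗ
  (TensorProduct.map LinearMap.id (TensorProduct.assoc K R R R).symm.toLinearMap) ∘ₗ
  (TensorProduct.assoc K R R (R ⊗[K] R)).toLinearMap

/-- The comultiplication `Δ_{R⊗R} = (id ⊗ c ⊗ id) ∘ (Δ_R ⊗ Δ_R)` of the coalgebra
`R ⊗ R` in `{}^H_H 𝒴𝒟`. -/
noncomputable def comulRR (act : (H ⊗[K] R) →ₗ[K] R) (ρ : R →ₗ[K] H ⊗[K] R) :
    (R ⊗[K] R) →ₗ[K] (R ⊗[K] R) ⊗[K] (R ⊗[K] R) :=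
  midMap (braidRR act ρ) ∘ₗ (TensorProduct.map Coalgebra.comul Coalgebra.comul)

/-- The diagonal action `h · (r ⊗ s) = h₁·r ⊗ h₂·s` of `H` on `R ⊗ R`. -/
noncomputable def actRR (act : (H ⊗[K] R) →ₗ[K] R) :
    (H ⊗[K] (R ⊗[K] R)) →ₗ[K] R ⊗[K] R :=
  (TensorProduct.map act act) ∘ₗ
  (TensorProduct.tensorTensorTensorComm K H H R R).toLinearMap ∘ₗ
  (TensorProduct.map Coalgebra.comul LinearMap.id)

end Defs

/-!
Put `A = R ⊗ R` and `z = Δ_A(x ⊗ y) = (R ⊗ c ⊗ R)(Δx ⊗ Δy)`. By the hexagon axioms the braiding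
`c_{A,A}` equals `(R ⊗ c ⊗ R)(c ⊗ c)(R ⊗ c ⊗ R)`, so the three hypotheses on `x` and `y` give
`c_{A,A} z = z`. On the other hand `H`-linearity of `ω` and the counit axiom of the
coaction give `(ω ⊗ μ)(c_{A,A}(a ⊗ b)) = ω(a₍₋₁₎ · b) μ(a₍₀₎) = ω(b) μ(a)`, hence
`(ω * μ)(x ⊗ y) = (ω ⊗ μ)(c_{A,A} z) = (μ * ω)(x ⊗ y)`.
-/

namespace YetterDrinfeld

open LinearMap

variable {K H M N P : Type*} [CommSemiring K] [AddCommMonoid H] [Module K H]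
  [AddCommMonoid M] [Module K M] [AddCommMonoid N] [Module K N] [AddCommMonoid P] [Module K P]

noncomputable def braid (ρ : M →ₗ[K] H ⊗[K] M) (act : H ⊗[K] N →ₗ[K] N) :
    M ⊗[K] N →ₗ[K] N ⊗[K] M :=
  rTensor M act ∘ₗ (TensorProduct.assoc K H N M).symm.toLinearMap ∘ₗ
    lTensor H (TensorProduct.comm K M N).toLinearMap ∘ₗ
    (TensorProduct.assoc K H M N).toLinearMap ∘ₗ rTensor N ρ

lemma braid_tmul (ρ : M →ₗ[K] H ⊗[K] M) (act : H ⊗[K] N →ₗ[K] N) (m : M) (n : N) :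
    braid ρ act (m ⊗ₜ n) = rTensor M (act ∘ₗ (TensorProduct.mk K H N).flip n) (ρ m) := by
  simp only [braid, coe_comp, Function.comp_apply, rTensor_tmul]
  induction ρ m using TensorProduct.induction_on with
  | zero => simp
  | tmul _ _ => simp
  | add _ _ hs ht => simp_all [add_tmul]

lemma _root_.braidRR_eq_braid {K H R : Type*} [CommRing K] [Ring H] [HopfAlgebra K H]
    [AddCommGroup R] [Module K R] (act : H ⊗[K] R →ₗ[K] R) (ρ : R →ₗ[K] H ⊗[K] R) :
    braidRR act ρ = braid ρ act := rfl

noncomputable def diagAct [Coalgebra K H] (actN : H ⊗[K] N →ₗ[K] N) (actP : H ⊗[K] P →ₗ[K] P) :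
    H ⊗[K] (N ⊗[K] P) →ₗ[K] N ⊗[K] P :=
  map actN actP ∘ₗ (TensorProduct.tensorTensorTensorComm K H H N P).toLinearMap ∘ₗ
    rTensor (N ⊗[K] P) Coalgebra.comul

lemma _root_.actRR_eq_diagAct {K H R : Type*} [CommRing K] [Ring H] [HopfAlgebra K H]
    [AddCommGroup R] [Module K R] (act : H ⊗[K] R →ₗ[K] R) :
    actRR act = diagAct act act := rfl

lemma diagAct_comp_flip [Coalgebra K H] (actN : H ⊗[K] N →ₗ[K] N) (actP : H ⊗[K] P →ₗ[K] P)
    (n : N) (p : P) :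
    diagAct actN actP ∘ₗ (TensorProduct.mk K H (N ⊗[K] P)).flip (n ⊗ₜ p) =
      map (actN ∘ₗ (TensorProduct.mk K H N).flip n) (actP ∘ₗ (TensorProduct.mk K H P).flip p) ∘ₗ
        Coalgebra.comul := by
  ext h
  simp only [diagAct, coe_comp, Function.comp_apply, flip_apply, TensorProduct.mk_apply,
    rTensor_tmul]
  induction Coalgebra.comul (R := K) h using TensorProduct.induction_on with
  | zero => simp
  | tmul _ _ => simp
  | add _ _ hs ht => simp_all [add_tmul]

/-- The braiding `c_{M, N ⊗ P}` that the hexagon axiom builds from `c_{M,N}` and `c_{M,P}`. -/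
noncomputable def tensorBraidRight (cN : M ⊗[K] N →ₗ[K] N ⊗[K] M)
    (cP : M ⊗[K] P →ₗ[K] P ⊗[K] M) :
    M ⊗[K] (N ⊗[K] P) →ₗ[K] (N ⊗[K] P) ⊗[K] M :=
  (TensorProduct.assoc K N P M).symm.toLinearMap ∘ₗ lTensor N cP ∘ₗ
    (TensorProduct.assoc K N M P).toLinearMap ∘ₗ rTensor P cN ∘ₗ
    (TensorProduct.assoc K M N P).symm.toLinearMap

theorem braid_diagAct [Coalgebra K H] (ρ : M →ₗ[K] H ⊗[K] M)
    (hcoassoc : (TensorProduct.map Coalgebra.comul LinearMap.id) ∘ₗ ρ =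
      (TensorProduct.assoc K H H M).symm.toLinearMap ∘ₗ (TensorProduct.map LinearMap.id ρ) ∘ₗ ρ)
    (actN : H ⊗[K] N →ₗ[K] N) (actP : H ⊗[K] P →ₗ[K] P) :
    braid ρ (diagAct actN actP) = tensorBraidRight (braid ρ actN) (braid ρ actP) := by
  refine TensorProduct.ext_threefold' fun m n p ↦ ?_
  have hm : rTensor M Coalgebra.comul (ρ m) =
      (TensorProduct.assoc K H H M).symm (lTensor H ρ (ρ m)) := congr($hcoassoc m)
  rw [braid_tmul, diagAct_comp_flip, rTensor_comp_apply, hm]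
  simp only [tensorBraidRight, coe_comp, Function.comp_apply, LinearEquiv.coe_coe,
    TensorProduct.assoc_symm_tmul, rTensor_tmul, braid_tmul]
  induction ρ m using TensorProduct.induction_on with
  | zero => simp
  | add _ _ hs ht => simp_all [add_tmul]
  | tmul g m' =>
    simp only [rTensor_tmul, TensorProduct.assoc_tmul, lTensor_tmul, braid_tmul]
    induction ρ m' using TensorProduct.induction_on with
    | zero => simp
    | add _ _ hs ht => simp_all [tmul_add]
    | tmul _ _ => simp

theorem rTensor_comp_braid_of_counit [Coalgebra K H] (ρ : M →ₗ[K] H ⊗[K] M)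
    (hcounit : (TensorProduct.lid K M).toLinearMap ∘ₗ
        (TensorProduct.map Coalgebra.counit LinearMap.id) ∘ₗ ρ = LinearMap.id)
    (act : H ⊗[K] N →ₗ[K] N) (f : N →ₗ[K] K)
    (hf : ∀ (h : H) (n : N), f (act (h ⊗ₜ n)) = Coalgebra.counit (R := K) h * f n) :
    rTensor M f ∘ₗ braid ρ act = rTensor M f ∘ₗ (TensorProduct.comm K M N).toLinearMap := by
  refine TensorProduct.ext' fun m n ↦ ?_
  have hm : rTensor M Coalgebra.counit (ρ m) = 1 ⊗ₜ m := by
    rw [← TensorProduct.lid_symm_apply, LinearEquiv.eq_symm_apply]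
    exact congr($hcounit m)
  have hfn : f ∘ₗ act ∘ₗ (TensorProduct.mk K H N).flip n = f n • Coalgebra.counit := by
    ext h
    simp [hf, mul_comm]
  rw [comp_apply, braid_tmul, ← rTensor_comp_apply, hfn, rTensor_smul, LinearMap.smul_apply,
    hm, TensorProduct.smul_tmul', smul_eq_mul, mul_one]
  rfl

variable {M₁ M₂ : Type*} [AddCommMonoid M₁] [Module K M₁] [AddCommMonoid M₂] [Module K M₂]

/-- The braiding `c_{M₁ ⊗ M₂, N}` that the hexagon axiom builds from `c_{M₁,N}` and `c_{M₂,N}`. -/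
noncomputable def tensorBraidLeft (c₁ : M₁ ⊗[K] N →ₗ[K] N ⊗[K] M₁)
    (c₂ : M₂ ⊗[K] N →ₗ[K] N ⊗[K] M₂) :
    (M₁ ⊗[K] M₂) ⊗[K] N →ₗ[K] N ⊗[K] (M₁ ⊗[K] M₂) :=
  (TensorProduct.assoc K N M₁ M₂).toLinearMap ∘ₗ rTensor M₂ c₁ ∘ₗ
    (TensorProduct.assoc K M₁ N M₂).symm.toLinearMap ∘ₗ lTensor M₁ c₂ ∘ₗ
    (TensorProduct.assoc K M₁ M₂ N).toLinearMap

theorem rTensor_comp_tensorBraidLeft (f : N →ₗ[K] K)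
    {c₁ : M₁ ⊗[K] N →ₗ[K] N ⊗[K] M₁} {c₂ : M₂ ⊗[K] N →ₗ[K] N ⊗[K] M₂}
    (h₁ : rTensor M₁ f ∘ₗ c₁ = rTensor M₁ f ∘ₗ (TensorProduct.comm K M₁ N).toLinearMap)
    (h₂ : rTensor M₂ f ∘ₗ c₂ = rTensor M₂ f ∘ₗ (TensorProduct.comm K M₂ N).toLinearMap) :
    rTensor (M₁ ⊗[K] M₂) f ∘ₗ tensorBraidLeft c₁ c₂ =
      rTensor (M₁ ⊗[K] M₂) f ∘ₗ (TensorProduct.comm K (M₁ ⊗[K] M₂) N).toLinearMap := by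
  refine TensorProduct.ext_threefold fun m₁ m₂ n ↦ ?_
  have key : ∀ X : N ⊗[K] M₂,
      rTensor (M₁ ⊗[K] M₂) f (TensorProduct.assoc K N M₁ M₂
        (rTensor M₂ c₁ ((TensorProduct.assoc K M₁ N M₂).symm (m₁ ⊗ₜ X)))) =
      lTensor K (TensorProduct.mk K M₁ M₂ m₁) (rTensor M₂ f X) := by
    intro X
    induction X using TensorProduct.induction_on with
    | zero => simp
    | add _ _ hs ht => simp_all [tmul_add]
    | tmul n' m₂' =>
      have h := congr($h₁ (m₁ ⊗ₜ n'))
      simp only [comp_apply, LinearEquiv.coe_coe, TensorProduct.comm_tmul, rTensor_tmul] at h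
      simp [rTensor_tensor, h]
  have h := congr($h₂ (m₂ ⊗ₜ n))
  simp only [comp_apply, LinearEquiv.coe_coe, TensorProduct.comm_tmul, rTensor_tmul] at h
  simp [tensorBraidLeft, key, h]

theorem lid_comp_map_comp_of_rTensor_comp_eq {X Y A : Type*} [AddCommMonoid X] [Module K X]
    [AddCommMonoid Y] [Module K Y] [AddCommMonoid A] [Module K A]
    (ω : A →ₗ[K] K) (μ : X →ₗ[K] Y) {D : X ⊗[K] A →ₗ[K] A ⊗[K] X}
    (hD : rTensor X ω ∘ₗ D = rTensor X ω ∘ₗ (TensorProduct.comm K X A).toLinearMap) :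
    (TensorProduct.lid K Y).toLinearMap ∘ₗ map ω μ ∘ₗ D =
      (TensorProduct.rid K Y).toLinearMap ∘ₗ map μ ω := by
  rw [← lTensor_comp_rTensor, comp_assoc, hD]
  ext x a
  simp

end YetterDrinfeld

section midMap

open LinearMap YetterDrinfeld

variable {K R : Type*} [CommRing K] [AddCommGroup R] [Module K R]

lemma midMap_tmul (f : R ⊗[K] R →ₗ[K] R ⊗[K] R) (a b p q : R) :
    midMap f ((a ⊗ₜ b) ⊗ₜ (p ⊗ₜ q)) =
      (TensorProduct.assoc K R R (R ⊗[K] R)).symm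
        (a ⊗ₜ TensorProduct.assoc K R R R (f (b ⊗ₜ p) ⊗ₜ q)) := by
  simp [midMap]

lemma midMap_comp (f g : R ⊗[K] R →ₗ[K] R ⊗[K] R) :
    midMap (f ∘ₗ g) = midMap f ∘ₗ midMap g := by
  refine TensorProduct.ext_fourfold' fun a b p q ↦ ?_
  simp only [midMap_tmul, comp_apply]
  induction g (b ⊗ₜ p) using TensorProduct.induction_on with
  | zero => simp
  | add _ _ hs ht => simp only [map_add, add_tmul, tmul_add, hs, ht]
  | tmul _ _ => simp [midMap_tmul]

/-- For `c` the braiding of `R`, the right-hand side is the braiding `c_{R ⊗ R, R ⊗ R}`. -/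
theorem midMap_comp_map_comp_midMap (c : R ⊗[K] R →ₗ[K] R ⊗[K] R) :
    midMap c ∘ₗ TensorProduct.map c c ∘ₗ midMap c =
      tensorBraidLeft (tensorBraidRight c c) (tensorBraidRight c c) := by
  refine TensorProduct.ext_fourfold' fun a b p q ↦ ?_
  simp only [midMap_tmul, tensorBraidLeft, tensorBraidRight, comp_apply, LinearEquiv.coe_coe,
    TensorProduct.assoc_tmul, TensorProduct.assoc_symm_tmul, lTensor_tmul, rTensor_tmul]
  induction c (b ⊗ₜ p) using TensorProduct.induction_on with
  | zero => simp
  | add _ _ hs ht => simp_all [add_tmul, tmul_add]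
  | tmul u v =>
    simp only [TensorProduct.assoc_tmul, TensorProduct.assoc_symm_tmul, lTensor_tmul,
      TensorProduct.map_tmul]
    induction c (v ⊗ₜ q) using TensorProduct.induction_on with
    | zero => simp
    | add _ _ hs ht => simp_all [tmul_add]
    | tmul s t =>
      simp only [comp_apply, LinearEquiv.coe_coe, TensorProduct.assoc_symm_tmul, rTensor_tmul]
      induction c (a ⊗ₜ u) using TensorProduct.induction_on with
      | zero => simp
      | add _ _ hs ht => simp_all [add_tmul]
      | tmul e g =>
        simp only [midMap_tmul, TensorProduct.assoc_tmul, lTensor_tmul]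
        induction c (g ⊗ₜ s) using TensorProduct.induction_on with
        | zero => simp
        | add _ _ hs ht => simp_all [add_tmul, tmul_add]
        | tmul _ _ => simp

end midMap

open LinearMap YetterDrinfeld in
theorem conv_comm_of_cocommutative_general {K H R : Type*} [CommRing K] [Ring H]
    [HopfAlgebra K H] [AddCommGroup R] [Module K R] [Coalgebra K R]
    (act : (H ⊗[K] R) →ₗ[K] R) (ρ : R →ₗ[K] H ⊗[K] R)
    (hcounit : (TensorProduct.lid K R).toLinearMap ∘ₗ
        (TensorProduct.map Coalgebra.counit LinearMap.id) ∘ₗ ρ = LinearMap.id)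
    (hcoassoc : (TensorProduct.map Coalgebra.comul LinearMap.id) ∘ₗ ρ =
      (TensorProduct.assoc K H H R).symm.toLinearMap ∘ₗ
        (TensorProduct.map LinearMap.id ρ) ∘ₗ ρ)
    (x y : R)
    (hx : braidRR act ρ (Coalgebra.comul x) = Coalgebra.comul x)
    (hy : braidRR act ρ (Coalgebra.comul y) = Coalgebra.comul y)
    (hxy : midMap ((braidRR act ρ) ∘ₗ (braidRR act ρ))
        ((TensorProduct.map Coalgebra.comul Coalgebra.comul) (x ⊗ₜ[K] y)) =
      (TensorProduct.map Coalgebra.comul Coalgebra.comul) (x ⊗ₜ[K] y))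
    (ω : (R ⊗[K] R) →ₗ[K] K)
    (hω : ∀ (h : H) (z : R ⊗[K] R),
      ω (actRR act (h ⊗ₜ[K] z)) = Coalgebra.counit (R := K) h * ω z)
    (μ : (R ⊗[K] R) →ₗ[K] R) :
    ((TensorProduct.lid K R).toLinearMap ∘ₗ (TensorProduct.map ω μ) ∘ₗ
        comulRR act ρ) (x ⊗ₜ[K] y) =
      ((TensorProduct.rid K R).toLinearMap ∘ₗ (TensorProduct.map μ ω) ∘ₗ
        comulRR act ρ) (x ⊗ₜ[K] y) := by
  have hcA : braid ρ (actRR act) = tensorBraidRight (braidRR act ρ) (braidRR act ρ) := by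
    rw [actRR_eq_diagAct, braidRR_eq_braid, braid_diagAct ρ hcoassoc]
  have hfix : tensorBraidLeft (braid ρ (actRR act)) (braid ρ (actRR act))
      (comulRR act ρ (x ⊗ₜ y)) = comulRR act ρ (x ⊗ₜ y) := by
    rw [comulRR, comp_apply, hcA]
    generalize braidRR act ρ = c at hx hy hxy
    rw [← midMap_comp_map_comp_midMap, comp_apply, comp_apply, ← comp_apply (midMap c) (midMap c),
      ← midMap_comp, hxy, TensorProduct.map_tmul, TensorProduct.map_tmul, hx, hy]
  have hωA := rTensor_comp_braid_of_counit ρ hcounit (actRR act) ω hω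
  have hswap := congr($(lid_comp_map_comp_of_rTensor_comp_eq ω μ
    (rTensor_comp_tensorBraidLeft ω hωA hωA)) (comulRR act ρ (x ⊗ₜ y)))
  simpa only [comp_apply, hfix] using hswap

/-- Let `R` be a coalgebra in `{}^H_H 𝒴𝒟` with braiding `c`, and
`x, y ∈ R` with `c Δ(x) = Δ(x)`, `c Δ(y) = Δ(y)` and
`(R ⊗ c² ⊗ R)(Δ ⊗ Δ)(x ⊗ y) = (Δ ⊗ Δ)(x ⊗ y)`.  Then for any left `H`-linear
`ω : R ⊗ R → K` and any linear `μ : R ⊗ R → R`, one has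
`(ω * μ)(x ⊗ y) = (μ * ω)(x ⊗ y)`. -/
theorem conv_comm_of_cocommutative {K H R : Type*} [CommRing K] [Ring H]
    [HopfAlgebra K H] [AddCommGroup R] [Module K R] [Coalgebra K R]
    (act : (H ⊗[K] R) →ₗ[K] R) (ρ : R →ₗ[K] H ⊗[K] R)
    (hact_one : ∀ z : R, act ((1 : H) ⊗ₜ[K] z) = z)
    (hact_mul : ∀ (g h : H) (z : R),
      act ((g * h) ⊗ₜ[K] z) = act (g ⊗ₜ[K] act (h ⊗ₜ[K] z)))
    (hcounit : (TensorProduct.lid K R).toLinearMap ∘ₗ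
        (TensorProduct.map Coalgebra.counit LinearMap.id) ∘ₗ ρ = LinearMap.id)
    (hcoassoc : (TensorProduct.map Coalgebra.comul LinearMap.id) ∘ₗ ρ =
      (TensorProduct.assoc K H H R).symm.toLinearMap ∘ₗ
        (TensorProduct.map LinearMap.id ρ) ∘ₗ ρ)
    (x y : R)
    (hx : braidRR act ρ (Coalgebra.comul x) = Coalgebra.comul x)
    (hy : braidRR act ρ (Coalgebra.comul y) = Coalgebra.comul y)
    (hxy : midMap ((braidRR act ρ) ∘ₗ (braidRR act ρ))
        ((TensorProduct.map Coalgebra.comul Coalgebra.comul) (x ⊗ₜ[K] y)) =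
      (TensorProduct.map Coalgebra.comul Coalgebra.comul) (x ⊗ₜ[K] y))
    (ω : (R ⊗[K] R) →ₗ[K] K)
    (hω : ∀ (h : H) (z : R ⊗[K] R),
      ω (actRR act (h ⊗ₜ[K] z)) = Coalgebra.counit (R := K) h * ω z)
    (μ : (R ⊗[K] R) →ₗ[K] R) :
    ((TensorProduct.lid K R).toLinearMap ∘ₗ (TensorProduct.map ω μ) ∘ₗ
        comulRR act ρ) (x ⊗ₜ[K] y) =
      ((TensorProduct.rid K R).toLinearMap ∘ₗ (TensorProduct.map μ ω) ∘ₗ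
        comulRR act ρ) (x ⊗ₜ[K] y) :=
  conv_comm_of_cocommutative_general act ρ hcounit hcoassoc x y hx hy hxy ω hω μ
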